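/- Let φ : C' ⥤ C be an equivalence of small categories and let D : FC ⥤ Ab be a natural system on C. Then for every n ≥ 0 the induced map is an isomorphism (R^n lim_{FC})(D) ≅ (R^n lim_{FC'})(D ∘ Fφ) between the n-th right derived limit of D over FC and the n-th right derived limit of the pullback natural system φ*D = D ∘ Fφ over FC'. (Equivalently: equivalences of small categories induce isomorphisms in Baues-Wirsching cohomology.) -/

import Mathlib

/-!
STATEMENT 9: If `φ : C' ⥤ C` is an equivalence of small categories and `D : FC ⥤ Ab` is a
natural system on `C`, then for every `n ≥ 0` there is an isomorphism
`(R^n lim_{FC})(D) ≅ (R^n lim_{FC'})(D ∘ Fφ)`; i.e. equivalences of small categories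
induce isomorphisms in Baues-Wirsching cohomology `H^n_BW(C, D) ≅ H^n_BW(C', φ*D)`.
-/

open CategoryTheory CategoryTheory.Limits CategoryTheory.Functor

universe u

/-- Objects of the factorization category `FC`: the morphisms of `C`. -/
structure FCObj (C : Type u) [SmallCategory C] : Type u where
  src : C
  tgt : C
  hom : src ⟶ tgt

namespace FCObj

variable {C : Type u} [SmallCategory C]

/-- Morphisms `(α, β) : f ⟶ f'` in the factorization category, where `α : a' ⟶ a`,
`β : b ⟶ b'` and `f' = β ∘ f ∘ α`. -/
structure Hom (f g : FCObj C) : Type u where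
  alpha : g.src ⟶ f.src
  beta : f.tgt ⟶ g.tgt
  w : g.hom = alpha ≫ f.hom ≫ beta

theorem Hom.ext' {f g : FCObj C} {p q : Hom f g}
    (h1 : p.alpha = q.alpha) (h2 : p.beta = q.beta) : p = q := by
  cases p; cases q; cases h1; cases h2; rfl

/-- The factorization category of `C`, with composition `(α', β') ∘ (α, β) = (α ≫ α', β' ≫ β)`. -/
instance category : Category (FCObj C) where
  Hom f g := Hom f g
  id f := ⟨𝟙 _, 𝟙 _, by simp⟩
  comp p q := ⟨q.alpha ≫ p.alpha, p.beta ≫ q.beta, by rw [q.w, p.w]; simp⟩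
  id_comp p := Hom.ext' (by simp) (by simp)
  comp_id p := Hom.ext' (by simp) (by simp)
  assoc p q r := Hom.ext' (by simp) (by simp)

@[simp] theorem id_alpha (f : FCObj C) : Hom.alpha (𝟙 f) = 𝟙 f.src := rfl
@[simp] theorem id_beta (f : FCObj C) : Hom.beta (𝟙 f) = 𝟙 f.tgt := rfl
@[simp] theorem comp_alpha {f g h : FCObj C} (p : f ⟶ g) (q : g ⟶ h) :
    Hom.alpha (p ≫ q) = q.alpha ≫ p.alpha := rfl
@[simp] theorem comp_beta {f g h : FCObj C} (p : f ⟶ g) (q : g ⟶ h) :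
    Hom.beta (p ≫ q) = p.beta ≫ q.beta := rfl

/-- The functor `Fφ : FC' ⥤ FC` induced on factorization categories by `φ : C' ⥤ C`,
given by `f ↦ φ(f)` and `(α, β) ↦ (φ(α), φ(β))`. -/
def map {C' : Type u} [SmallCategory C'] (φ : C' ⥤ C) : FCObj C' ⥤ FCObj C where
  obj f := ⟨φ.obj f.src, φ.obj f.tgt, φ.map f.hom⟩
  map p := ⟨φ.map p.alpha, φ.map p.beta, by simp [p.w]⟩
  map_id _ := Hom.ext' (by simp) (by simp)
  map_comp _ _ := Hom.ext' (by simp) (by simp)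

end FCObj

noncomputable instance limAdditive {J : Type u} [SmallCategory J] :
    (lim : (J ⥤ AddCommGrpCat.{u}) ⥤ AddCommGrpCat.{u}).Additive :=
  Functor.additive_of_preserves_binary_products _

/-!
An equivalence `φ` induces an equivalence `Fφ` of factorization categories; in particular `Fφ`
is initial, so `lim_{FC'} ∘ (Fφ)^* ≅ lim_{FC}`. Restriction `(Fφ)^*` along an equivalence is
exact and preserves injectives, hence carries injective resolutions of `D` to injective
resolutions of `D ∘ Fφ`, and the right derived functors of `lim_{FC'} ∘ (Fφ)^*` at `D` are those
of `lim_{FC'}` at `D ∘ Fφ`.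
-/

namespace FCObj

variable {C' C : Type u} [SmallCategory C'] [SmallCategory C]

def isoMk {f g : FCObj C} (e₁ : f.src ≅ g.src) (e₂ : f.tgt ≅ g.tgt)
    (w : g.hom = e₁.inv ≫ f.hom ≫ e₂.hom) : f ≅ g where
  hom := ⟨e₁.inv, e₂.hom, w⟩
  inv := ⟨e₁.hom, e₂.inv, by rw [w]; simp⟩
  hom_inv_id := Hom.ext' (by simp) (by simp)
  inv_hom_id := Hom.ext' (by simp) (by simp)

instance map_faithful (φ : C' ⥤ C) [φ.Faithful] : (map φ).Faithful where
  map_injective h :=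
    Hom.ext' (φ.map_injective (congrArg Hom.alpha h)) (φ.map_injective (congrArg Hom.beta h))

instance map_full (φ : C' ⥤ C) [φ.Full] [φ.Faithful] : (map φ).Full where
  map_surjective q :=
    ⟨⟨φ.preimage q.alpha, φ.preimage q.beta, φ.map_injective (by simpa [map] using q.w)⟩,
      Hom.ext' (by simp [map]) (by simp [map])⟩

instance map_essSurj (φ : C' ⥤ C) [φ.Full] [φ.EssSurj] : (map φ).EssSurj where
  mem_essImage g :=
    ⟨⟨φ.objPreimage g.src, φ.objPreimage g.tgt,
      φ.preimage ((φ.objObjPreimageIso g.src).hom ≫ g.hom ≫ (φ.objObjPreimageIso g.tgt).inv)⟩,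
      ⟨isoMk (φ.objObjPreimageIso g.src) (φ.objObjPreimageIso g.tgt) (by simp [map])⟩⟩

instance map_isEquivalence (φ : C' ⥤ C) [φ.IsEquivalence] : (map φ).IsEquivalence where

end FCObj

namespace CategoryTheory

variable {A B T : Type*} [Category A] [Category B] [Category T] [Abelian A] [Abelian B] [Abelian T]

noncomputable def NatIso.rightDerived [HasInjectiveResolutions A] {F G : A ⥤ B}
    [F.Additive] [G.Additive] (η : F ≅ G) (n : ℕ) : F.rightDerived n ≅ G.rightDerived n where
  hom := NatTrans.rightDerived η.hom n
  inv := NatTrans.rightDerived η.inv n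
  hom_inv_id := by rw [← NatTrans.rightDerived_comp, η.hom_inv_id, NatTrans.rightDerived_id]
  inv_hom_id := by rw [← NatTrans.rightDerived_comp, η.inv_hom_id, NatTrans.rightDerived_id]

namespace Functor

noncomputable def mapInjectiveResolution (F : A ⥤ B) [F.Additive]
    [F.PreservesInjectiveObjects] [F.PreservesHomology] {Z : A} (I : InjectiveResolution Z) :
    InjectiveResolution (F.obj Z) where
  cocomplex := (F.mapHomologicalComplex _).obj I.cocomplex
  injective n := PreservesInjectiveObjects.injective_obj (I.injective n)
  ι := (HomologicalComplex.singleMapHomologicalComplex F _ 0).inv.app Z ≫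
    (F.mapHomologicalComplex _).map I.ι
  quasiIso := inferInstance

noncomputable def rightDerivedObjCompIso [HasInjectiveResolutions A] [HasInjectiveResolutions B]
    (E : A ⥤ B) [E.Additive] [E.PreservesInjectiveObjects] [E.PreservesHomology]
    (G : B ⥤ T) [G.Additive] (X : A) (n : ℕ) :
    ((E ⋙ G).rightDerived n).obj X ≅ (G.rightDerived n).obj (E.obj X) :=
  let I := injectiveResolution X
  -- `(E ⋙ G)` applied to `I` is definitionally `G` applied to `E.mapInjectiveResolution I`.
  I.isoRightDerivedObj (E ⋙ G) n ≪≫ ((E.mapInjectiveResolution I).isoRightDerivedObj G n).symm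

end Functor

end CategoryTheory

noncomputable def limRightDerivedObjIsoOfInitial {J' J : Type u}
    [SmallCategory J'] [SmallCategory J]
    [EnoughInjectives (J ⥤ AddCommGrpCat.{u})] [EnoughInjectives (J' ⥤ AddCommGrpCat.{u})]
    (F : J' ⥤ J) [F.Initial]
    [((whiskeringLeft J' J AddCommGrpCat.{u}).obj F).PreservesInjectiveObjects]
    (D : J ⥤ AddCommGrpCat.{u}) (n : ℕ) :
    ((lim : (J ⥤ AddCommGrpCat.{u}) ⥤ AddCommGrpCat.{u}).rightDerived n).obj D ≅
      ((lim : (J' ⥤ AddCommGrpCat.{u}) ⥤ AddCommGrpCat.{u}).rightDerived n).obj (F ⋙ D) :=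
  (NatIso.rightDerived (Functor.Initial.limIso F) n).symm.app D ≪≫
    ((whiskeringLeft J' J AddCommGrpCat.{u}).obj F).rightDerivedObjCompIso lim D n

theorem bauesWirsching_cohomology_invariance {C' C : Type u} [SmallCategory C'] [SmallCategory C]
    (φ : C' ⥤ C) (h : φ.IsEquivalence) (D : FCObj C ⥤ AddCommGrpCat.{u}) (n : ℕ)
    [EnoughInjectives (FCObj C ⥤ AddCommGrpCat.{u})]
    [EnoughInjectives (FCObj C' ⥤ AddCommGrpCat.{u})] :
    Nonempty
      ((((lim : (FCObj C ⥤ AddCommGrpCat.{u}) ⥤ AddCommGrpCat.{u}).rightDerived n).obj D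
          : AddCommGrpCat.{u}) ≅
        ((lim : (FCObj C' ⥤ AddCommGrpCat.{u}) ⥤ AddCommGrpCat.{u}).rightDerived n).obj
          (FCObj.map φ ⋙ D)) :=
  ⟨limRightDerivedObjIsoOfInitial (FCObj.map φ) D n⟩
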